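/- Let n, k, l ≥ 1 and suppose T : ℂ → Matrix (Fin n) (Fin n) ℂ has Keldysh form on the disk D(c, r) with data (U, H, λ, v, w). Let V : Matrix (Fin n) (Fin k) ℂ be the matrix with columns v_1, …, v_k and W : Matrix (Fin n) (Fin k) ℂ the matrix with columns w_1, …, w_k, and assume V has rank k. Let Z : Matrix (Fin n) (Fin l) ℂ be such that Wᴴ * Z has rank k. Define M₀ = (1/(2πi)) · ∮_{|ξ−c|=r} T(ξ)⁻¹ * Z dξ and M₁ = (1/(2πi)) · ∮_{|ξ−c|=r} ξ • (T(ξ)⁻¹ * Z) dξ. Suppose M₀ = V₀ * Σ₀ * W₀ᴴ, where V₀ : Matrix (Fin n) (Fin k) ℂ satisfies V₀ᴴ * V₀ = 1, W₀ : Matrix (Fin l) (Fin k) ℂ satisfies W₀ᴴ * W₀ = 1, and Σ₀ : Matrix (Fin k) (Fin k) ℂ is invertible. Then the spectrum of the k×k matrix B := V₀ᴴ * M₁ * W₀ * Σ₀⁻¹ is exactly {λ_1, …, λ_k}. (This is Beyn's theorem: the eigenvalues of T enclosed by the contour are recovered as the eigenvalues of B.) -/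
import Mathlib

open Complex MeasureTheory Matrix

attribute [local instance] Matrix.normedAddCommGroup Matrix.normedSpace

private lemma circleIntegral_finset_sum' {E : Type*} [NormedAddCommGroup E] [NormedSpace ℂ E]
    {ι : Type*} (s : Finset ι) (f : ι → ℂ → E) (c : ℂ) (R : ℝ)
    (h : ∀ i ∈ s, CircleIntegrable (f i) c R) :
    (∮ z in C(c, R), ∑ i ∈ s, f i z) = ∑ i ∈ s, ∮ z in C(c, R), f i z := by
  simp only [circleIntegral, Finset.smul_sum]
  exact intervalIntegral.integral_finset_sum (fun i hi => (h i hi).out)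

private lemma circleIntegral_add' {E : Type*} [NormedAddCommGroup E] [NormedSpace ℂ E]
    {f g : ℂ → E} {c : ℂ} {R : ℝ}
    (hf : CircleIntegrable f c R) (hg : CircleIntegrable g c R) :
    (∮ z in C(c, R), (f z + g z)) = (∮ z in C(c, R), f z) + ∮ z in C(c, R), g z := by
  simp only [circleIntegral, smul_add]
  exact intervalIntegral.integral_add hf.out hg.out

set_option maxHeartbeats 1000000

/-- Beyn's theorem: if `T` has Keldysh form on the disk `D(c, r)` with data `(U, H, lam, v, w)`,
the eigenvector matrix `V` has full column rank, the probed matrix `Wᴴ Z` has rank `k`, and the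
zeroth contour moment `M₀` admits a truncated SVD `M₀ = V₀ * Sig₀ * W₀ᴴ`, then the spectrum of
`B = V₀ᴴ * M₁ * W₀ * Sig₀⁻¹` is exactly `{λ_1, …, λ_k}`. -/
theorem beyn_spectrum_eq_range
    (n k l : ℕ) (hn : 1 ≤ n) (hk : 1 ≤ k) (hl : 1 ≤ l)
    (T H : ℂ → Matrix (Fin n) (Fin n) ℂ) (c : ℂ) (r : ℝ) (hr : 0 < r)
    (U : Set ℂ) (hU : IsOpen U) (hUc : Metric.closedBall c r ⊆ U)
    (hH : DifferentiableOn ℂ H U)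
    (lam : Fin k → ℂ) (hlam_inj : Function.Injective lam)
    (hlam_mem : ∀ i, lam i ∈ Metric.ball c r)
    (v w : Fin k → Fin n → ℂ)
    (hT : ∀ ξ ∈ U, ξ ∉ Set.range lam →
      IsUnit (T ξ) ∧
      (T ξ)⁻¹ = H ξ +
        ∑ i, (ξ - lam i)⁻¹ • Matrix.vecMulVec (v i) (fun q => (starRingEnd ℂ) (w i q)))
    (V W : Matrix (Fin n) (Fin k) ℂ)
    (hV_col : ∀ i p, V p i = v i p) (hW_col : ∀ i p, W p i = w i p)
    (hV : V.rank = k)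
    (Z : Matrix (Fin n) (Fin l) ℂ) (hWZ : (W.conjTranspose * Z).rank = k)
    (V₀ : Matrix (Fin n) (Fin k) ℂ) (W₀ : Matrix (Fin l) (Fin k) ℂ)
    (Sig₀ : Matrix (Fin k) (Fin k) ℂ)
    (hSVD : (2 * (Real.pi : ℂ) * Complex.I)⁻¹ • (∮ ξ in C(c, r), (T ξ)⁻¹ * Z) =
      V₀ * Sig₀ * W₀.conjTranspose)
    (hV₀ : V₀.conjTranspose * V₀ = 1)
    (hW₀ : W₀.conjTranspose * W₀ = 1)
    (hSig₀ : IsUnit Sig₀) :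
    spectrum ℂ
      (V₀.conjTranspose *
        ((2 * (Real.pi : ℂ) * Complex.I)⁻¹ • (∮ ξ in C(c, r), ξ • ((T ξ)⁻¹ * Z))) *
        W₀ * Sig₀⁻¹) = Set.range lam := by
  classical
  have hπ : (2 * (Real.pi : ℂ) * Complex.I) ≠ 0 := by
    simp [Real.pi_ne_zero, Complex.I_ne_zero]
  have hsphereU : Metric.sphere c r ⊆ U := Metric.sphere_subset_closedBall.trans hUc
  have hsphere_not : ∀ ξ ∈ Metric.sphere c r, ξ ∉ Set.range lam := by
    rintro ξ hξ ⟨i, rfl⟩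
    have h1 := hlam_mem i
    rw [Metric.mem_ball] at h1
    rw [Metric.mem_sphere] at hξ
    exact absurd hξ (ne_of_lt h1)
  -- constant matrices
  set A : Fin k → Matrix (Fin n) (Fin l) ℂ :=
    fun i => Matrix.vecMulVec (v i) (fun q => (starRingEnd ℂ) (w i q)) * Z with hA
  have hsum : ∀ d : Fin k → ℂ,
      (∑ i, d i • A i) = V * Matrix.diagonal d * W.conjTranspose * Z := by
    intro d
    have h0 : (∑ i, d i • Matrix.vecMulVec (v i) (fun q => (starRingEnd ℂ) (w i q)))
        = V * Matrix.diagonal d * W.conjTranspose := by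
      ext p q
      rw [Matrix.mul_assoc]
      simp only [Matrix.sum_apply, Matrix.smul_apply, Matrix.vecMulVec_apply, Matrix.mul_apply,
        Matrix.diagonal_apply, Matrix.conjTranspose_apply, hV_col, hW_col, smul_eq_mul,
        ite_mul, zero_mul, Finset.sum_ite_eq, Finset.mem_univ, if_true, starRingEnd_apply]
      exact Finset.sum_congr rfl fun i _ => by ring
    have h1 : (∑ i, d i • A i)
        = ∑ i, (d i • Matrix.vecMulVec (v i) (fun q => (starRingEnd ℂ) (w i q))) * Z :=
      Finset.sum_congr rfl fun i _ => (Matrix.smul_mul _ _ _).symm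
    rw [h1, ← Matrix.sum_mul, h0]
  -- differentiability of ξ ↦ H ξ * Z
  let L : Matrix (Fin n) (Fin n) ℂ →ₗ[ℂ] Matrix (Fin n) (Fin l) ℂ :=
    { toFun := fun M => M * Z
      map_add' := fun M N => Matrix.add_mul M N Z
      map_smul' := fun a M => Matrix.smul_mul a M Z }
  let Lc := LinearMap.toContinuousLinearMap L
  have hHZ_diff : ∀ z ∈ Metric.ball c r, DifferentiableAt ℂ (fun ξ => H ξ * Z) z := by
    intro z hz
    have hzU : z ∈ U := hUc (Metric.ball_subset_closedBall hz)
    have : DifferentiableAt ℂ H z := (hH z hzU).differentiableAt (hU.mem_nhds hzU)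
    exact (Lc.differentiableAt).comp z this
  have hHZ_cont : ContinuousOn (fun ξ => H ξ * Z) (Metric.closedBall c r) :=
    Lc.continuous.comp_continuousOn (hH.continuousOn.mono hUc)
  -- zero integrals
  have hH0 : (∮ ξ in C(c, r), H ξ * Z) = 0 :=
    Complex.circleIntegral_eq_zero_of_differentiable_on_off_countable hr.le Set.countable_empty
      hHZ_cont (fun z hz => hHZ_diff z hz.1)
  have hH1 : (∮ ξ in C(c, r), ξ • (H ξ * Z)) = 0 :=
    Complex.circleIntegral_eq_zero_of_differentiable_on_off_countable hr.le Set.countable_empty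
      ((continuousOn_id.smul hHZ_cont))
      (fun z hz => (differentiableAt_id.smul (hHZ_diff z hz.1)))
  -- integrability of the pole terms
  have hne : ∀ i, ∀ ξ ∈ Metric.sphere c r, ξ - lam i ≠ 0 := by
    intro i ξ hξ h
    exact hsphere_not ξ hξ ⟨i, (sub_eq_zero.mp h).symm⟩
  have hcont_inv : ∀ i, ContinuousOn (fun ξ : ℂ => (ξ - lam i)⁻¹) (Metric.sphere c r) :=
    fun i => ((continuousOn_id.sub continuousOn_const).inv₀ (hne i))
  have hint_g0 : ∀ i : Fin k, CircleIntegrable (fun ξ => (ξ - lam i)⁻¹ • A i) c r :=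
    fun i => ((hcont_inv i).smul continuousOn_const).circleIntegrable hr.le
  have hint_g1 : ∀ i : Fin k, CircleIntegrable (fun ξ => (ξ - lam i)⁻¹ • (ξ • A i)) c r :=
    fun i => ((hcont_inv i).smul (continuousOn_id.smul continuousOn_const)).circleIntegrable hr.le
  have hint_HZ : CircleIntegrable (fun ξ => H ξ * Z) c r :=
    (hHZ_cont.mono Metric.sphere_subset_closedBall).circleIntegrable hr.le
  have hint_HZ1 : CircleIntegrable (fun ξ => ξ • (H ξ * Z)) c r :=
    (continuousOn_id.smul (hHZ_cont.mono Metric.sphere_subset_closedBall)).circleIntegrable hr.le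
  -- pole integrals
  have h0i : ∀ i : Fin k, (∮ ξ in C(c, r), (ξ - lam i)⁻¹ • A i)
      = (2 * (Real.pi : ℂ) * Complex.I) • A i := by
    intro i
    rw [circleIntegral.integral_smul_const,
      circleIntegral.integral_sub_inv_of_mem_ball (hlam_mem i)]
  have h1i : ∀ i : Fin k, (∮ ξ in C(c, r), (ξ - lam i)⁻¹ • (ξ • A i))
      = (2 * (Real.pi : ℂ) * Complex.I) • (lam i • A i) := by
    intro i
    have hdiff : DiffContOnCl ℂ (fun ξ : ℂ => ξ • A i) (Metric.ball c r) :=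
      (differentiable_id.smul_const (A i)).diffContOnCl
    exact hdiff.circleIntegral_sub_inv_smul (hlam_mem i)
  -- equality of integrands on the circle
  have hEq0 : Set.EqOn (fun ξ => (T ξ)⁻¹ * Z)
      (fun ξ => H ξ * Z + ∑ i, (ξ - lam i)⁻¹ • A i) (Metric.sphere c r) := by
    intro ξ hξ
    have h := (hT ξ (hsphereU hξ) (hsphere_not ξ hξ)).2
    show (T ξ)⁻¹ * Z = _
    rw [h, Matrix.add_mul, Matrix.sum_mul]
    congr 1
    exact Finset.sum_congr rfl fun i _ => Matrix.smul_mul _ _ _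
  have hEq1 : Set.EqOn (fun ξ => ξ • ((T ξ)⁻¹ * Z))
      (fun ξ => ξ • (H ξ * Z) + ∑ i, (ξ - lam i)⁻¹ • (ξ • A i)) (Metric.sphere c r) := by
    intro ξ hξ
    show ξ • ((T ξ)⁻¹ * Z) = _
    rw [show (T ξ)⁻¹ * Z = H ξ * Z + ∑ i, (ξ - lam i)⁻¹ • A i from hEq0 hξ]
    rw [smul_add, Finset.smul_sum]
    congr 1
    exact Finset.sum_congr rfl fun i _ => smul_comm _ _ _
  -- the two moments
  have I0 : (∮ ξ in C(c, r), (T ξ)⁻¹ * Z)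
      = (2 * (Real.pi : ℂ) * Complex.I) • (V * W.conjTranspose * Z) := by
    rw [circleIntegral.integral_congr hr.le hEq0,
      circleIntegral_add' hint_HZ (by
        exact ((continuousOn_finset_sum _ fun i _ =>
          ((hcont_inv i).smul continuousOn_const)).circleIntegrable hr.le)),
      hH0, zero_add, circleIntegral_finset_sum' _ _ _ _ (fun i _ => hint_g0 i)]
    have : (∑ i : Fin k, (2 * (Real.pi : ℂ) * Complex.I) • A i)
        = (2 * (Real.pi : ℂ) * Complex.I) • (V * W.conjTranspose * Z) := by
      rw [← Finset.smul_sum]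
      congr 1
      have := hsum (fun _ => (1 : ℂ))
      simpa [Matrix.diagonal_one] using this
    rw [Finset.sum_congr rfl fun i _ => h0i i, this]
  have I1 : (∮ ξ in C(c, r), ξ • ((T ξ)⁻¹ * Z))
      = (2 * (Real.pi : ℂ) * Complex.I) • (V * Matrix.diagonal lam * W.conjTranspose * Z) := by
    rw [circleIntegral.integral_congr hr.le hEq1,
      circleIntegral_add' hint_HZ1 (by
        exact ((continuousOn_finset_sum _ fun i _ =>
          ((hcont_inv i).smul (continuousOn_id.smul continuousOn_const))).circleIntegrable hr.le)),
      hH1, zero_add, circleIntegral_finset_sum' _ _ _ _ (fun i _ => hint_g1 i)]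
    rw [Finset.sum_congr rfl fun i _ => h1i i, ← Finset.smul_sum]
    congr 1
    exact hsum lam
  -- the SVD identity
  have hM0 : V * W.conjTranspose * Z = V₀ * Sig₀ * W₀.conjTranspose := by
    rw [I0, inv_smul_smul₀ hπ] at hSVD
    exact hSVD
  -- algebraic finish
  rw [I1, inv_smul_smul₀ hπ]
  set P : Matrix (Fin k) (Fin k) ℂ := V₀.conjTranspose * V with hP
  set X : Matrix (Fin k) (Fin k) ℂ := W.conjTranspose * Z * W₀ * Sig₀⁻¹ with hX
  have hSig₀d : IsUnit Sig₀.det := (Matrix.isUnit_iff_isUnit_det _).mp hSig₀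
  have hPX : P * X = 1 := by
    have : P * X = V₀.conjTranspose * (V * W.conjTranspose * Z) * W₀ * Sig₀⁻¹ := by
      simp only [hP, hX, Matrix.mul_assoc]
    rw [this, hM0]
    simp only [← Matrix.mul_assoc]
    rw [hV₀, Matrix.one_mul, Matrix.mul_assoc Sig₀, hW₀, Matrix.mul_one,
      Matrix.mul_nonsing_inv _ hSig₀d]
  have hXP : X * P = 1 := mul_eq_one_comm.mp hPX
  have hB : V₀.conjTranspose * (V * Matrix.diagonal lam * W.conjTranspose * Z) * W₀ * Sig₀⁻¹
      = P * Matrix.diagonal lam * X := by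
    simp only [hP, hX, Matrix.mul_assoc]
  rw [hB]
  let u : (Matrix (Fin k) (Fin k) ℂ)ˣ := ⟨P, X, hPX, hXP⟩
  calc spectrum ℂ (P * Matrix.diagonal lam * X)
      = spectrum ℂ ((u : Matrix (Fin k) (Fin k) ℂ) * Matrix.diagonal lam * ↑u⁻¹) := rfl
    _ = spectrum ℂ (Matrix.diagonal lam) := spectrum.units_conjugate
    _ = Set.range lam := spectrum_diagonal lam
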